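/- arXiv:math/0308241 — 4 statements merged into one kernel-verified Lean document; each statement's English description precedes it below -/
import Mathlib

section
/- Let E be a real inner product space and let J, J' : E → E be orthogonal complex structures (J ∘ J = -id, J' ∘ J' = -id, both preserving the inner product). If J ∘ J' + J' ∘ J = λ • id with λ = 2 or λ = -2, then J' = -(λ/2) • J; in particular J' = J or J' = -J. -/
open RealInnerProductSpace

theorem anticommutator_equality_case
    {E : Type*} [NormedAddCommGroup E] [InnerProductSpace ℝ E]
    (J J' : E →ₗ[ℝ] E)
    (hJ2 : J ∘ₗ J = -LinearMap.id)
    (hJ'2 : J' ∘ₗ J' = -LinearMap.id)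
    (hJo : ∀ x y : E, ⟪J x, J y⟫ = ⟪x, y⟫)
    (hJ'o : ∀ x y : E, ⟪J' x, J' y⟫ = ⟪x, y⟫)
    (l : ℝ) (hQ : J ∘ₗ J' + J' ∘ₗ J = l • LinearMap.id)
    (hl : l = 2 ∨ l = -2) :
    J' = (-(l / 2)) • J ∧ (J' = J ∨ J' = -J) := by
  have hJ2' : ∀ x : E, J (J x) = -x := fun x => by
    have := congrArg (fun f : E →ₗ[ℝ] E => f x) hJ2
    simpa using this
  have hJ'2' : ∀ x : E, J' (J' x) = -x := fun x => by
    have := congrArg (fun f : E →ₗ[ℝ] E => f x) hJ'2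
    simpa using this
  have hJadj : ∀ x y : E, ⟪J x, y⟫ = -⟪x, J y⟫ := fun x y => by
    calc ⟪J x, y⟫ = ⟪J x, -(J (J y))⟫ := by rw [hJ2' y]; simp
    _ = -⟪J x, J (J y)⟫ := by rw [inner_neg_right]
    _ = -⟪x, J y⟫ := by rw [hJo]
  have hJ'adj : ∀ x y : E, ⟪J' x, y⟫ = -⟪x, J' y⟫ := fun x y => by
    calc ⟪J' x, y⟫ = ⟪J' x, -(J' (J' y))⟫ := by rw [hJ'2' y]; simp
    _ = -⟪J' x, J' (J' y)⟫ := by rw [inner_neg_right]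
    _ = -⟪x, J' y⟫ := by rw [hJ'o]
  have hQ' : ∀ x : E, J (J' x) + J' (J x) = l • x := fun x => by
    have := congrArg (fun f : E →ₗ[ℝ] E => f x) hQ
    simpa using this
  have key : ∀ x : E, ⟪J' x, J x⟫ = -(l / 2) * ⟪x, x⟫ := fun x => by
    have h := congrArg (fun z => ⟪z, x⟫) (hQ' x)
    simp only [inner_add_left, real_inner_smul_left] at h
    rw [hJadj (J' x) x, hJ'adj (J x) x] at h
    have hc := real_inner_comm (J x) (J' x)
    linarith
  have hl2 : l ^ 2 = 4 := by rcases hl with h | h <;> subst h <;> norm_num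
  have main : J' = (-(l / 2)) • J := by
    ext x
    have hd : ⟪J' x + (l / 2) • J x, J' x + (l / 2) • J x⟫ = 0 := by
      rw [inner_add_add_self, real_inner_smul_left, real_inner_smul_right,
        real_inner_smul_left, real_inner_smul_right, hJo, hJ'o, real_inner_comm (J' x) (J x)]
      rw [key x]
      linear_combination (-(⟪x, x⟫ : ℝ) / 4) * hl2
    have h0 := inner_self_eq_zero.mp hd
    simp only [LinearMap.smul_apply, neg_smul]
    exact eq_neg_of_add_eq_zero_left h0
  refine ⟨main, ?_⟩
  rcases hl with h | h <;> subst h <;> [right; left] <;> rw [main] <;> norm_num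
end

section
/- Let E be a real inner product space and let J, J' : E → E be orthogonal complex structures with J ∘ J' + J' ∘ J = λ • id for a real number λ with λ² < 4. Then I := (4 - λ²)^(-1/2) • (J ∘ J' - J' ∘ J) is an orthogonal complex structure on E, i.e. I ∘ I = -id and ⟨I x, I y⟩ = ⟨x, y⟩ for all x, y. -/
open RealInnerProductSpace

theorem normalized_commutator_is_orthogonal_complex_structure
    {E : Type*} [NormedAddCommGroup E] [InnerProductSpace ℝ E]
    (J J' : E →ₗ[ℝ] E)
    (hJ2 : J ∘ₗ J = -LinearMap.id)
    (hJ'2 : J' ∘ₗ J' = -LinearMap.id)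
    (hJo : ∀ x y : E, ⟪J x, J y⟫ = ⟪x, y⟫)
    (hJ'o : ∀ x y : E, ⟪J' x, J' y⟫ = ⟪x, y⟫)
    (l : ℝ) (hl : l ^ 2 < 4)
    (hQ : J ∘ₗ J' + J' ∘ₗ J = l • LinearMap.id)
    (I : E →ₗ[ℝ] E) (hI : I = (Real.sqrt (4 - l ^ 2))⁻¹ • (J ∘ₗ J' - J' ∘ₗ J)) :
    I ∘ₗ I = -LinearMap.id ∧ ∀ x y : E, ⟪I x, I y⟫ = ⟪x, y⟫ := by
  set c := Real.sqrt (4 - l ^ 2) with hcdef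
  have hpos : (0:ℝ) < 4 - l ^ 2 := by linarith
  have hc2 : c ^ 2 = 4 - l ^ 2 := Real.sq_sqrt hpos.le
  have hcne : c ≠ 0 := by
    intro h
    rw [h] at hc2
    simp at hc2
    linarith
  have hJ2' : J * J = -1 := hJ2
  have hJ'2' : J' * J' = -1 := hJ'2
  have hQ' : J * J' + J' * J = l • 1 := hQ
  have hb : J' * J = l • (1 : E →ₗ[ℝ] E) - J * J' := by
    rw [← hQ']; noncomm_ring
  have ha : J * J' = l • (1 : E →ₗ[ℝ] E) - J' * J := by
    rw [← hQ']; noncomm_ring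
  have hab : (J * J') * (J' * J) = 1 := by
    have h1 : (J * J') * (J' * J) = J * (J' * J') * J := by noncomm_ring
    rw [h1, hJ'2']
    have h2 : J * (-1 : E →ₗ[ℝ] E) * J = -(J * J) := by noncomm_ring
    rw [h2, hJ2', neg_neg]
  have hba : (J' * J) * (J * J') = 1 := by
    have h1 : (J' * J) * (J * J') = J' * (J * J) * J' := by noncomm_ring
    rw [h1, hJ2']
    have h2 : J' * (-1 : E →ₗ[ℝ] E) * J' = -(J' * J') := by noncomm_ring
    rw [h2, hJ'2', neg_neg]
  have hJJ'' : J * (J * J') * J' = (1 : E →ₗ[ℝ] E) := by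
    have h1 : J * (J * J') * J' = (J * J) * (J' * J') := by noncomm_ring
    rw [h1, hJ2', hJ'2']
    have : (-1 : E →ₗ[ℝ] E) * -1 = 1 := by noncomm_ring
    exact this
  have hJ'J : J' * (J' * J) * J = (1 : E →ₗ[ℝ] E) := by
    have h1 : J' * (J' * J) * J = (J' * J') * (J * J) := by noncomm_ring
    rw [h1, hJ2', hJ'2']
    have : (-1 : E →ₗ[ℝ] E) * -1 = 1 := by noncomm_ring
    exact this
  have haa : (J * J') * (J * J') = l • (J * J') - 1 := by
    have h1 : (J * J') * (J * J') = J * (J' * J) * J' := by noncomm_ring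
    rw [h1, hb, mul_sub, sub_mul, mul_smul_comm, smul_mul_assoc, mul_one, hJJ'']
  have hbb : (J' * J) * (J' * J) = l • (J' * J) - 1 := by
    have h1 : (J' * J) * (J' * J) = J' * (J * J') * J := by noncomm_ring
    rw [h1, ha, mul_sub, sub_mul, mul_smul_comm, smul_mul_assoc, mul_one, hJ'J]
  have hD2 : (J * J' - J' * J) * (J * J' - J' * J) = (l ^ 2 - 4) • 1 := by
    have hexp : (J * J' - J' * J) * (J * J' - J' * J)
        = (J * J') * (J * J') - (J * J') * (J' * J) - (J' * J) * (J * J')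
          + (J' * J) * (J' * J) := by
      noncomm_ring
    rw [hexp, haa, hbb, hab, hba]
    have step : l • (J * J') - 1 - 1 - 1 + (l • (J' * J) - 1)
        = l • (J * J' + J' * J) - (4:ℝ) • (1 : E →ₗ[ℝ] E) := by module
    rw [step, hQ', smul_smul]
    module
  have hII : I * I = -1 := by
    rw [hI]
    have h1 : ((c⁻¹ : ℝ) • (J ∘ₗ J' - J' ∘ₗ J)) * ((c⁻¹ : ℝ) • (J ∘ₗ J' - J' ∘ₗ J))
        = (c⁻¹ * c⁻¹) • ((J * J' - J' * J) * (J * J' - J' * J)) := by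
      rw [smul_mul_assoc, mul_smul_comm, smul_smul]; rfl
    rw [h1, hD2, smul_smul]
    have hcc : c * c = 4 - l ^ 2 := by nlinarith [hc2]
    have hs : c⁻¹ * c⁻¹ * (l ^ 2 - 4) = -1 := by
      have h2 : c⁻¹ * c⁻¹ * (l ^ 2 - 4) = (l ^ 2 - 4) / (c * c) := by
        field_simp
      rw [h2, hcc, div_eq_iff (by linarith)]
      ring
    rw [hs]
    simp
  refine ⟨hII, ?_⟩
  have hJadj : ∀ x y : E, ⟪J x, y⟫ = -⟪x, J y⟫ := by
    intro x y
    have h := hJo x (J y)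
    have h2 : J (J y) = -y := by
      have := LinearMap.congr_fun hJ2 y; simpa using this
    rw [h2] at h
    simp at h
    linarith
  have hJ'adj : ∀ x y : E, ⟪J' x, y⟫ = -⟪x, J' y⟫ := by
    intro x y
    have h := hJ'o x (J' y)
    have h2 : J' (J' y) = -y := by
      have := LinearMap.congr_fun hJ'2 y; simpa using this
    rw [h2] at h
    simp at h
    linarith
  set D : E →ₗ[ℝ] E := J ∘ₗ J' - J' ∘ₗ J with hDdef
  have hskew : ∀ x y : E, ⟪D x, y⟫ = -⟪x, D y⟫ := by
    intro x y
    have h1 : ⟪J (J' x), y⟫ = ⟪x, J' (J y)⟫ := by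
      rw [hJadj, hJ'adj]; ring
    have h2 : ⟪J' (J x), y⟫ = ⟪x, J (J' y)⟫ := by
      rw [hJ'adj, hJadj]; ring
    have hDx : D x = J (J' x) - J' (J x) := rfl
    have hDy : D y = J (J' y) - J' (J y) := rfl
    rw [hDx, hDy, inner_sub_left, inner_sub_right, h1, h2]
    ring
  have hDD : ∀ z : E, D (D z) = (l ^ 2 - 4) • z := by
    intro z
    have hD2' : D ∘ₗ D = (l ^ 2 - 4) • LinearMap.id := hD2
    have := LinearMap.congr_fun hD2' z
    simpa using this
  intro x y
  have hIx : I x = c⁻¹ • D x := by rw [hI]; rfl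
  have hIy : I y = c⁻¹ • D y := by rw [hI]; rfl
  rw [hIx, hIy, real_inner_smul_left, real_inner_smul_right, hskew, hDD y,
    real_inner_smul_right]
  have hcc : c⁻¹ * c⁻¹ * (4 - l ^ 2) = 1 := by
    rw [← hc2, pow_two]
    field_simp
  calc c⁻¹ * (c⁻¹ * -((l ^ 2 - 4) * ⟪x, y⟫))
      = (c⁻¹ * c⁻¹ * (4 - l ^ 2)) * ⟪x, y⟫ := by ring
    _ = ⟪x, y⟫ := by rw [hcc, one_mul]
end

section
/- Let E be a real inner product space and let J, J' : E → E be orthogonal complex structures with J ∘ J' + J' ∘ J = λ • id for a real number λ with λ² < 4, and set I := (4 - λ²)^(-1/2) • (J ∘ J' - J' ∘ J) and K := I ∘ J. Then J' = -(λ/2) • J + (Real.sqrt (4 - λ²)/2) • K; in particular J' = b • J + c • K with b² + c² = 1, so J' belongs to the S²-family of complex structures generated by (I, J, K). -/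
open RealInnerProductSpace

theorem J'_in_S2_family
    {E : Type*} [NormedAddCommGroup E] [InnerProductSpace ℝ E]
    (J J' : E →ₗ[ℝ] E)
    (hJ2 : J ∘ₗ J = -LinearMap.id)
    (hJ'2 : J' ∘ₗ J' = -LinearMap.id)
    (hJo : ∀ x y : E, ⟪J x, J y⟫ = ⟪x, y⟫)
    (hJ'o : ∀ x y : E, ⟪J' x, J' y⟫ = ⟪x, y⟫)
    (l : ℝ) (hl : l ^ 2 < 4)
    (hQ : J ∘ₗ J' + J' ∘ₗ J = l • LinearMap.id)
    (I K : E →ₗ[ℝ] E)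
    (hI : I = (Real.sqrt (4 - l ^ 2))⁻¹ • (J ∘ₗ J' - J' ∘ₗ J))
    (hK : K = I ∘ₗ J) :
    J' = (-(l / 2)) • J + (Real.sqrt (4 - l ^ 2) / 2) • K ∧
    ∃ b c : ℝ, b ^ 2 + c ^ 2 = 1 ∧ J' = b • J + c • K := by
  have hpos : (0:ℝ) < 4 - l ^ 2 := by linarith
  have hsq : Real.sqrt (4 - l ^ 2) ^ 2 = 4 - l ^ 2 := Real.sq_sqrt hpos.le
  have hs0 : Real.sqrt (4 - l ^ 2) ≠ 0 := by positivity
  have h1 : ∀ x, J (J x) = -x := fun x => by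
    simpa using LinearMap.ext_iff.mp hJ2 x
  have h2 : ∀ x, J (J' x) + J' (J x) = l • x := fun x => by
    simpa using LinearMap.ext_iff.mp hQ x
  have hmain : J' = (-(l / 2)) • J + (Real.sqrt (4 - l ^ 2) / 2) • K := by
    subst hK hI
    ext x
    have e1 : J' (J (J x)) = -(J' x) := by rw [h1]; exact map_neg _ _
    have e2 : J (J' (J x)) = l • J x - J' (J (J x)) :=
      eq_sub_of_add_eq (h2 (J x))
    simp only [LinearMap.add_apply, LinearMap.smul_apply, LinearMap.comp_apply,
      LinearMap.sub_apply]
    rw [e2, e1]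
    match_scalars <;> (field_simp; try ring)
  refine ⟨hmain, -(l/2), Real.sqrt (4 - l ^ 2) / 2, ?_, hmain⟩
  nlinarith [hsq]
end

section
/- Let E be a nontrivial real inner product space and let J, J' : E → E be orthogonal complex structures with J' ≠ J and J' ≠ -J, and suppose J ∘ J' + J' ∘ J = λ • id for some real number λ. Then λ² < 4, and there exists an orthogonal complex structure I on E anticommuting with both J and J' such that, with K := I ∘ J, one has J' = -(λ/2) • J + (Real.sqrt (4 - λ²)/2) • K; in particular (I, J, K) is a quaternionic triple of orthogonal complex structures and J' belongs to the S²-family a • I + b • J + c • K (a² + b² + c² = 1) that it generates. -/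
open RealInnerProductSpace

theorem two_kahler_structures_generate_hyperkahler
    {E : Type*} [NormedAddCommGroup E] [InnerProductSpace ℝ E] [Nontrivial E]
    (J J' : E →ₗ[ℝ] E)
    (hJ2 : J ∘ₗ J = -LinearMap.id)
    (hJ'2 : J' ∘ₗ J' = -LinearMap.id)
    (hJo : ∀ x y : E, ⟪J x, J y⟫ = ⟪x, y⟫)
    (hJ'o : ∀ x y : E, ⟪J' x, J' y⟫ = ⟪x, y⟫)
    (hne : J' ≠ J) (hne' : J' ≠ -J)
    (l : ℝ) (hQ : J ∘ₗ J' + J' ∘ₗ J = l • LinearMap.id) :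
    l ^ 2 < 4 ∧
    ∃ I : E →ₗ[ℝ] E,
      I ∘ₗ I = -LinearMap.id ∧
      (∀ x y : E, ⟪I x, I y⟫ = ⟪x, y⟫) ∧
      I ∘ₗ J + J ∘ₗ I = 0 ∧
      I ∘ₗ J' + J' ∘ₗ I = 0 ∧
      (I ∘ₗ J) ∘ₗ (I ∘ₗ J) = -LinearMap.id ∧
      (∀ x y : E, ⟪(I ∘ₗ J) x, (I ∘ₗ J) y⟫ = ⟪x, y⟫) ∧
      (I ∘ₗ J) ∘ₗ I + I ∘ₗ (I ∘ₗ J) = 0 ∧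
      (I ∘ₗ J) ∘ₗ J + J ∘ₗ (I ∘ₗ J) = 0 ∧
      J' = (-(l / 2)) • J + (Real.sqrt (4 - l ^ 2) / 2) • (I ∘ₗ J) ∧
      ∃ a b c : ℝ, a ^ 2 + b ^ 2 + c ^ 2 = 1 ∧
        J' = a • I + b • J + c • (I ∘ₗ J) := by
  -- pointwise versions of the hypotheses
  have hJ2' : ∀ x : E, J (J x) = -x := fun x => congrFun (congrArg DFunLike.coe hJ2) x
  have hJ'2' : ∀ x : E, J' (J' x) = -x := fun x => congrFun (congrArg DFunLike.coe hJ'2) x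
  have hQ' : ∀ x : E, J (J' x) + J' (J x) = l • x :=
    fun x => congrFun (congrArg DFunLike.coe hQ) x
  -- skew-adjointness
  have hJsk : ∀ x y : E, ⟪J x, y⟫ = -⟪x, J y⟫ := by
    intro x y
    have := hJo x (J y)
    rw [hJ2' y, inner_neg_right] at this
    linarith
  have hJ'sk : ∀ x y : E, ⟪J' x, y⟫ = -⟪x, J' y⟫ := by
    intro x y
    have := hJ'o x (J' y)
    rw [hJ'2' y, inner_neg_right] at this
    linarith
  -- the map M = J' + (l/2) J
  have hex : ∃ M : E →ₗ[ℝ] E,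
      (∀ x : E, M x = J' x + (l / 2) • J x) ∧
      (∀ x : E, M (M x) = (l ^ 2 / 4 - 1) • x) ∧
      (∀ x : E, M (J x) = -J (M x)) ∧
      (∀ x y : E, ⟪M x, M y⟫ = (1 - l ^ 2 / 4) * ⟪x, y⟫) := by
    refine ⟨J' + (l / 2) • J, fun x => rfl, ?_, ?_, ?_⟩
    · intro x
      have h1 := hQ' x
      have h2 : J' (J x) = l • x - J (J' x) := by rw [← h1]; abel
      show (J' + (l / 2) • J) (J' x + (l / 2) • J x) = _
      simp only [LinearMap.add_apply, LinearMap.smul_apply, map_add, map_smul, hJ'2', hJ2', h2]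
      match_scalars <;> ring
    · intro x
      have h1 := hQ' x
      have h2 : J' (J x) = l • x - J (J' x) := by rw [← h1]; abel
      show J' (J x) + (l / 2) • J (J x) = -(J (J' x + (l / 2) • J x))
      rw [h2, hJ2', map_add, map_smul, hJ2']
      match_scalars <;> ring
    · have hMsk : ∀ x y : E, ⟪(J' + (l / 2) • J) x, y⟫ = -⟪x, (J' + (l / 2) • J) y⟫ := by
        intro x y
        simp only [LinearMap.add_apply, LinearMap.smul_apply, inner_add_left, inner_add_right,
          real_inner_smul_left, real_inner_smul_right, hJsk, hJ'sk]
        ring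
      intro x y
      have hMM : (J' + (l / 2) • J) ((J' + (l / 2) • J) y) = (l ^ 2 / 4 - 1) • y := by
        have h1 := hQ' y
        have h2 : J' (J y) = l • y - J (J' y) := by rw [← h1]; abel
        simp only [LinearMap.add_apply, LinearMap.smul_apply, map_add, map_smul, hJ'2', hJ2', h2]
        match_scalars <;> ring
      rw [hMsk x ((J' + (l / 2) • J) y), hMM, real_inner_smul_right]
      ring
  obtain ⟨M, hM, hMM, hMJ, hMo⟩ := hex
  -- l ^ 2 < 4
  obtain ⟨x₀, hx₀⟩ := exists_ne (0 : E)
  have hx₀' : (0 : ℝ) < ⟪x₀, x₀⟫ :=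
    lt_of_le_of_ne real_inner_self_nonneg (fun h => hx₀ (inner_self_eq_zero.mp h.symm))
  have hle : l ^ 2 ≤ 4 := by
    by_contra h
    push_neg at h
    have h1 : (0 : ℝ) ≤ ⟪M x₀, M x₀⟫ := real_inner_self_nonneg
    rw [hMo] at h1
    nlinarith
  have hlt : l ^ 2 < 4 := by
    rcases lt_or_eq_of_le hle with h | h
    · exact h
    · exfalso
      have hM0 : ∀ x : E, M x = 0 := by
        intro x
        have h1 : ⟪M x, M x⟫ = 0 := by rw [hMo, h]; ring
        exact inner_self_eq_zero.mp h1
      have hJ'eq : ∀ x : E, J' x = -((l / 2) • J x) := by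
        intro x
        have h0 := hM0 x
        rw [hM] at h0
        linear_combination (norm := module) h0
      have hll : l = 2 ∨ l = -2 := by
        have h2 : (l - 2) * (l + 2) = 0 := by nlinarith
        rcases mul_eq_zero.mp h2 with h' | h'
        · left; linarith
        · right; linarith
      rcases hll with h' | h'
      · apply hne'
        ext x
        rw [hJ'eq x, h', LinearMap.neg_apply]
        norm_num
      · apply hne
        ext x
        rw [hJ'eq x, h']
        match_scalars
        norm_num
  refine ⟨hlt, ?_⟩
  have h4l : (0 : ℝ) < 4 - l ^ 2 := by linarith
  have hμpos : 0 < Real.sqrt (4 - l ^ 2) := Real.sqrt_pos.mpr h4l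
  have hμsq : Real.sqrt (4 - l ^ 2) ^ 2 = 4 - l ^ 2 := Real.sq_sqrt h4l.le
  have hμne : Real.sqrt (4 - l ^ 2) ≠ 0 := hμpos.ne'
  -- K := (2/μ) • M, made opaque
  have hexK : ∃ K : E →ₗ[ℝ] E,
      (∀ x : E, K (K x) = -x) ∧
      (∀ x y : E, ⟪K x, K y⟫ = ⟪x, y⟫) ∧
      (∀ x : E, K (J x) = -J (K x)) ∧
      (∀ x : E, J' x = -((l / 2) • J x) + (Real.sqrt (4 - l ^ 2) / 2) • K x) := by
    set μ : ℝ := Real.sqrt (4 - l ^ 2)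
    have hc2 : (2 / μ) * (2 / μ) * (l ^ 2 / 4 - 1) = -1 := by
      field_simp
      nlinarith
    refine ⟨(2 / μ) • M, ?_, ?_, ?_, ?_⟩
    · intro x
      show (2 / μ) • M ((2 / μ) • M x) = -x
      rw [map_smul, hMM, smul_smul, smul_smul, hc2, neg_one_smul]
    · intro x y
      show ⟪(2 / μ) • M x, (2 / μ) • M y⟫ = ⟪x, y⟫
      rw [real_inner_smul_left, real_inner_smul_right, hMo]
      have h5 : 2 / μ * (2 / μ * ((1 - l ^ 2 / 4) * ⟪x, y⟫))
          = -((2 / μ) * (2 / μ) * (l ^ 2 / 4 - 1)) * ⟪x, y⟫ := by ring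
      rw [h5, hc2]
      ring
    · intro x
      show (2 / μ) • M (J x) = -J ((2 / μ) • M x)
      rw [hMJ, map_smul, smul_neg]
    · intro x
      have h6 : (μ / 2) * (2 / μ) = 1 := by field_simp
      show J' x = -((l / 2) • J x) + (μ / 2) • (2 / μ) • M x
      rw [smul_smul, h6, one_smul, hM]
      module
  obtain ⟨K, hK2, hKo, hKJ, hJ'x⟩ := hexK
  -- helper composite identities
  have hJK : ∀ x : E, J (K (J x)) = K x := by
    intro x
    rw [hKJ x, map_neg, hJ2', neg_neg]
  have hKJK : ∀ x : E, K (J (K x)) = J x := by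
    intro x
    rw [hKJ (K x), hK2 x, map_neg, neg_neg]
  -- I := J ∘ K
  have hIJ : (J ∘ₗ K) ∘ₗ J = K := by
    ext x
    simp only [LinearMap.comp_apply]
    exact hJK x
  refine ⟨J ∘ₗ K, ?_, ?_, ?_, ?_, ?_, ?_, ?_, ?_, ?_, ?_⟩
  · ext x
    simp only [LinearMap.comp_apply, LinearMap.neg_apply, LinearMap.id_apply]
    rw [hJK (K x), hK2]
  · intro x y
    simp only [LinearMap.comp_apply]
    rw [hJo, hKo]
  · ext x
    simp only [LinearMap.add_apply, LinearMap.comp_apply, LinearMap.zero_apply]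
    rw [hJK x, hJ2' (K x)]
    abel
  · ext x
    simp only [LinearMap.add_apply, LinearMap.comp_apply, LinearMap.zero_apply]
    rw [hJ'x x, hJ'x (J (K x))]
    simp only [map_add, map_neg, map_smul]
    rw [hJK x, hKJK x, hK2 x, hJ2' (K x)]
    simp only [map_neg, smul_neg, neg_neg]
    abel
  · rw [hIJ]
    ext x
    simp only [LinearMap.comp_apply, LinearMap.neg_apply, LinearMap.id_apply]
    exact hK2 x
  · intro x y
    have e1 : (((J ∘ₗ K) ∘ₗ J)) x = K x := by rw [hIJ]
    have e2 : (((J ∘ₗ K) ∘ₗ J)) y = K y := by rw [hIJ]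
    rw [e1, e2, hKo]
  · rw [hIJ]
    ext x
    simp only [LinearMap.add_apply, LinearMap.comp_apply, LinearMap.zero_apply]
    rw [hKJK x, hK2 x, map_neg]
    abel
  · rw [hIJ]
    ext x
    simp only [LinearMap.add_apply, LinearMap.comp_apply, LinearMap.zero_apply]
    rw [hKJ x]
    abel
  · rw [hIJ]
    ext x
    simp only [LinearMap.add_apply, LinearMap.smul_apply, LinearMap.neg_apply]
    rw [hJ'x x]
    module
  · refine ⟨0, -(l / 2), Real.sqrt (4 - l ^ 2) / 2, ?_, ?_⟩
    · nlinarith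
    · rw [hIJ]
      ext x
      simp only [LinearMap.add_apply, LinearMap.smul_apply, LinearMap.comp_apply,
        LinearMap.neg_apply, zero_smul, zero_add]
      rw [hJ'x x]
      module
end
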